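/- arXiv:2311.02683 — 2 statements merged into one kernel-verified Lean document; each statement's English description precedes it below -/
import Mathlib

section
/- Let Γ be a countable group acting topologically amenably on a locally compact space X, and let F be a finite group acting on X such that the F-action commutes with the Γ-action. Then the induced Γ-action on the quotient space X/F is topologically amenable. -/
/-!
Averaging a Reiter function over the finite group `F`,
`m̄ x g = (1/|F|) ∑_{f ∈ F} m (f x) g`, gives an `F`-invariant function that descends to `X/F`;
since the actions commute, its `Γ`-defect at `x` is the average of the defects of `m` at the
points `f x`. The quotient map `π : X → X/F` is closed with finite fibres, hence proper, so a
compact set `L` of `X/F` lifts to the compact saturated set `π⁻¹ L`, on which `m` is chosen.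
-/

/-- Topological amenability of an action `act` of a (countable, discrete) group
`Γ` on a topological space `X`. -/
def TopAmenable (Γ : Type*) [Group Γ] (X : Type*) [TopologicalSpace X]
    (act : Γ → X → X) : Prop :=
  ∀ ε > (0 : ℝ), ∀ K : Set Γ, K.Finite → ∀ L : Set X, IsCompact L →
    ∃ m : X → Γ → ℝ,
      (∀ x g, 0 ≤ m x g) ∧ (∀ x, HasSum (m x) 1) ∧
      (∀ g, Continuous fun x => m x g) ∧
      ∀ s ∈ K, ∀ x ∈ L, ∑' g, |m x (s⁻¹ * g) - m (act s x) g| ≤ ε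

/-- The orbit equivalence relation of a group action, as a setoid; the quotient
is the orbit space `X/F`. -/
def orbitSetoid (F : Type*) [Group F] (X : Type*) (actF : F → X → X)
    (h1 : ∀ x, actF 1 x = x)
    (hm : ∀ f g x, actF (f * g) x = actF f (actF g x)) : Setoid X :=
  ⟨fun x y => ∃ f : F, actF f x = y, by
    constructor
    · exact fun x => ⟨1, h1 x⟩
    · rintro x y ⟨f, rfl⟩
      exact ⟨f⁻¹, by rw [← hm, inv_mul_cancel, h1]⟩
    · rintro x y z ⟨f, rfl⟩ ⟨g, rfl⟩
      exact ⟨g * f, by rw [hm]⟩⟩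

section OrbitSpace

theorem isHomeomorph_act {F X : Type*} [Group F] [TopologicalSpace X] {actF : F → X → X}
    (hFone : ∀ x, actF 1 x = x) (hFmul : ∀ f g x, actF (f * g) x = actF f (actF g x))
    (hFcont : ∀ f, Continuous (actF f)) (f : F) : IsHomeomorph (actF f) :=
  isHomeomorph_iff_exists_inverse.mpr ⟨hFcont f, actF f⁻¹,
    fun x => by rw [← hFmul, inv_mul_cancel, hFone],
    fun x => by rw [← hFmul, mul_inv_cancel, hFone], hFcont f⁻¹⟩

variable {F X : Type*} [Group F] [TopologicalSpace X] {actF : F → X → X}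
  (hFone : ∀ x, actF 1 x = x) (hFmul : ∀ f g x, actF (f * g) x = actF f (actF g x))

omit [TopologicalSpace X] in
theorem preimage_image_orbitSetoid_mk (A : Set X) :
    Quotient.mk (orbitSetoid F X actF hFone hFmul) ⁻¹'
      (Quotient.mk (orbitSetoid F X actF hFone hFmul) '' A) = ⋃ f, actF f '' A := by
  ext y
  simp only [Set.mem_preimage, Set.mem_image, Set.mem_iUnion]
  constructor
  · rintro ⟨z, hz, hzy⟩
    obtain ⟨f, hf⟩ := Quotient.exact hzy
    exact ⟨f, z, hz, hf⟩
  · rintro ⟨f, z, hz, hf⟩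
    exact ⟨z, hz, Quotient.sound ⟨f, hf⟩⟩

theorem isProperMap_orbitSetoid_mk [Finite F] (hFcont : ∀ f, Continuous (actF f)) :
    IsProperMap (Quotient.mk (orbitSetoid F X actF hFone hFmul)) := by
  refine isProperMap_iff_isClosedMap_and_compact_fibers.mpr
    ⟨continuous_quotient_mk', fun C hC => ?_, Quotient.ind fun x => ?_⟩
  · rw [isClosed_coinduced]
    change IsClosed (Quotient.mk _ ⁻¹' _)
    rw [preimage_image_orbitSetoid_mk hFone hFmul]
    exact isClosed_iUnion_of_finite fun f =>
      (isHomeomorph_act hFone hFmul hFcont f).isClosedMap _ hC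
  · rw [← Set.image_singleton, preimage_image_orbitSetoid_mk hFone hFmul]
    exact isCompact_iUnion fun f => (Set.finite_singleton x).image _ |>.isCompact

end OrbitSpace

section Average

variable {Γ F X : Type*} [Fintype F]

theorem tsum_abs_sum_div_card_le {ι : Type*} [Fintype ι] [Nonempty ι] {a : ι → Γ → ℝ} {ε : ℝ}
    (ha : ∀ i, Summable (a i)) (hε : ∀ i, ∑' g, |a i g| ≤ ε) :
    ∑' g, |(∑ i, a i g) / Fintype.card ι| ≤ ε := by
  have hn : (0 : ℝ) < Fintype.card ι := by exact_mod_cast Fintype.card_pos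
  have habs : ∀ i, Summable fun g => |a i g| := fun i => (ha i).abs
  calc ∑' g, |(∑ i, a i g) / Fintype.card ι|
      = (∑' g, |∑ i, a i g|) / Fintype.card ι := by
        simp_rw [abs_div, Nat.abs_cast, tsum_div_const]
    _ ≤ (∑' g, ∑ i, |a i g|) / Fintype.card ι := by
        gcongr
        · exact (summable_sum fun i _ => ha i).abs
        · exact summable_sum fun i _ => habs i
        · exact Finset.abs_sum_le_sum_abs _ _
    _ = (∑ i, ∑' g, |a i g|) / Fintype.card ι := by
        rw [Summable.tsum_finsetSum fun i _ => habs i]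
    _ ≤ (∑ _i : ι, ε) / Fintype.card ι := by gcongr; exact hε _
    _ = ε := by
        rw [Finset.sum_const, Finset.card_univ, nsmul_eq_mul, mul_div_cancel_left₀ _ hn.ne']

noncomputable def orbitAverage (actF : F → X → X) (m : X → Γ → ℝ) (x : X) (g : Γ) : ℝ :=
  (∑ f, m (actF f x) g) / Fintype.card F

variable {actF : F → X → X} {m : X → Γ → ℝ}

theorem orbitAverage_act [Group F] (hFmul : ∀ f g x, actF (f * g) x = actF f (actF g x))
    (f₀ : F) (x : X) : orbitAverage actF m (actF f₀ x) = orbitAverage actF m x := by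
  funext g
  simp only [orbitAverage, ← hFmul]
  congr 1
  exact Fintype.sum_equiv (Equiv.mulRight f₀) _ _ fun _ => rfl

theorem orbitAverage_nonneg (hm : ∀ x g, 0 ≤ m x g) (x : X) (g : Γ) :
    0 ≤ orbitAverage actF m x g :=
  div_nonneg (Finset.sum_nonneg fun _ _ => hm _ _) (Nat.cast_nonneg _)

theorem hasSum_orbitAverage [Nonempty F] (hm : ∀ x, HasSum (m x) 1) (x : X) :
    HasSum (orbitAverage actF m x) 1 := by
  have hn : (Fintype.card F : ℝ) ≠ 0 := by exact_mod_cast Fintype.card_ne_zero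
  have := (hasSum_sum (s := .univ) fun f _ => hm (actF f x)).div_const (Fintype.card F)
  change HasSum (fun g => (∑ f, m (actF f x) g) / (Fintype.card F : ℝ)) 1
  simpa [hn] using this

theorem continuous_orbitAverage [TopologicalSpace X] (hFcont : ∀ f, Continuous (actF f))
    (hm : ∀ g, Continuous fun x => m x g) (g : Γ) :
    Continuous fun x => orbitAverage actF m x g :=
  (continuous_finsetSum _ fun f _ => (hm g).comp (hFcont f)).div_const _

theorem tsum_abs_orbitAverage_sub_le [Nonempty F] [Group Γ] {actG : Γ → X → X} {ε : ℝ}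
    (s : Γ) (x : X) (hcomm : ∀ f, actF f (actG s x) = actG s (actF f x))
    (hm : ∀ x, HasSum (m x) 1)
    (hε : ∀ f, ∑' g, |m (actF f x) (s⁻¹ * g) - m (actG s (actF f x)) g| ≤ ε) :
    ∑' g, |orbitAverage actF m x (s⁻¹ * g) - orbitAverage actF m (actG s x) g| ≤ ε := by
  have hdefect : ∀ g, orbitAverage actF m x (s⁻¹ * g) - orbitAverage actF m (actG s x) g
      = (∑ f, (m (actF f x) (s⁻¹ * g) - m (actG s (actF f x)) g)) / Fintype.card F := by
    intro g
    simp only [orbitAverage, hcomm, Finset.sum_sub_distrib, sub_div]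
  simp_rw [hdefect]
  exact tsum_abs_sum_div_card_le (fun f => ((hm _).summable.comp_injective
    (mul_right_injective s⁻¹)).sub (hm _).summable) hε

end Average

/-- if a countable group `Γ` acts topologically amenably on a
locally compact space `X`, and a finite group `F` acts on `X` commuting with
the `Γ`-action, then the induced `Γ`-action on the orbit space `X/F` is
topologically amenable. -/
theorem stmt13 (Γ : Type*) [Group Γ]
    (X : Type*) [TopologicalSpace X]
    (F : Type*) [Group F] [Finite F]
    (actG : Γ → X → X) (actF : F → X → X)
    (hFone : ∀ x, actF 1 x = x)
    (hFmul : ∀ f g x, actF (f * g) x = actF f (actF g x))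
    (hFcont : ∀ f, Continuous (actF f))
    (hcomm : ∀ (f : F) (g : Γ) (x : X), actF f (actG g x) = actG g (actF f x))
    (hamen : TopAmenable Γ X actG) :
    TopAmenable Γ (Quotient (orbitSetoid F X actF hFone hFmul))
      (fun g => Quotient.map (actG g)
        (fun x y => fun ⟨f, hf⟩ => ⟨f, by rw [hcomm, hf]⟩)) := by
  have : Fintype F := Fintype.ofFinite F
  intro ε hε K hK L hL
  obtain ⟨m, hm0, hm1, hmc, hmK⟩ := hamen ε hε K hK _
    ((isProperMap_orbitSetoid_mk hFone hFmul hFcont).isCompact_preimage hL)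
  refine ⟨Quotient.lift (orbitAverage actF m)
      fun _ _ ⟨f, hf⟩ => hf ▸ (orbitAverage_act hFmul f _).symm,
    Quotient.ind (orbitAverage_nonneg hm0), Quotient.ind (hasSum_orbitAverage hm1),
    fun g => continuous_coinduced_dom.mpr (continuous_orbitAverage hFcont hmc g), ?_⟩
  rintro s hs ⟨x⟩ hx
  refine tsum_abs_orbitAverage_sub_le s x (hcomm · s x) hm1 fun f => hmK s hs _ ?_
  rw [Set.mem_preimage, ← Quotient.sound (s := orbitSetoid F X actF hFone hFmul) ⟨f, rfl⟩]
  exact hx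
end

section
/- Let Γ be a countable group acting topologically amenably on a locally compact space X. Then for every n ≥ 2, the diagonal action of Γ on the n-fold symmetric product ΣⁿX = Xⁿ/Sym(n) is topologically amenable. -/
/-- The setoid on `Xⁿ` identifying tuples up to permutation of the coordinates
by `Sym(n)`; the quotient is the `n`-fold symmetric product `ΣⁿX`. -/
def symSetoid (n : ℕ) (X : Type*) : Setoid (Fin n → X) :=
  ⟨fun v w => ∃ σ : Equiv.Perm (Fin n), v ∘ σ = w, by
    constructor
    · exact fun v => ⟨Equiv.refl _, rfl⟩
    · rintro v w ⟨σ, rfl⟩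
      exact ⟨σ.symm, by ext i; simp⟩
    · rintro u v w ⟨σ, rfl⟩ ⟨τ, rfl⟩
      exact ⟨τ.trans σ, rfl⟩⟩

open Function Finset

section SymmetricProduct

variable {n : ℕ} {X : Type*}

lemma symSetoid_mk_preimage_image (U : Set (Fin n → X)) :
    Quotient.mk (symSetoid n X) ⁻¹' (Quotient.mk (symSetoid n X) '' U)
      = ⋃ σ : Equiv.Perm (Fin n), (fun w => w ∘ σ) ⁻¹' U := by
  ext w
  simp only [Set.mem_preimage, Set.mem_image, Set.mem_iUnion]
  constructor
  · rintro ⟨u, hu, he⟩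
    obtain ⟨σ, rfl⟩ := Quotient.exact he
    exact ⟨σ⁻¹, by simpa [comp_assoc] using hu⟩
  · rintro ⟨σ, hσ⟩
    exact ⟨w ∘ σ, hσ, Quotient.sound ⟨σ⁻¹, by funext i; simp⟩⟩

variable [TopologicalSpace X]

lemma isClosedMap_symSetoid_mk : IsClosedMap (Quotient.mk (symSetoid n X)) := by
  intro C hC
  refine isQuotientMap_quotient_mk'.isClosed_preimage.1 ?_
  change IsClosed (Quotient.mk (symSetoid n X) ⁻¹' _)
  rw [symSetoid_mk_preimage_image]
  exact isClosed_iUnion_of_finite fun σ => hC.preimage (by fun_prop)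

lemma isProperMap_symSetoid_mk : IsProperMap (Quotient.mk (symSetoid n X)) := by
  refine isProperMap_iff_isClosedMap_and_compact_fibers.2
    ⟨continuous_quotient_mk', isClosedMap_symSetoid_mk, fun y => ?_⟩
  induction y using Quotient.ind with
  | _ v =>
    convert (Set.finite_range fun σ : Equiv.Perm (Fin n) => v ∘ σ).isCompact
    ext w
    rw [Set.mem_preimage, Set.mem_singleton_iff, eq_comm, Quotient.eq]
    rfl

lemma exists_isCompact_forall_coord_mem {L : Set (Quotient (symSetoid n X))} (hL : IsCompact L) :
    ∃ L' : Set X, IsCompact L' ∧ ∀ v, Quotient.mk (symSetoid n X) v ∈ L → ∀ i, v i ∈ L' :=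
  ⟨⋃ i, (fun v => v i) '' (Quotient.mk (symSetoid n X) ⁻¹' L),
    isCompact_iUnion fun i =>
      (isProperMap_symSetoid_mk.isCompact_preimage hL).image (continuous_apply i),
    fun v hv i => Set.mem_iUnion.2 ⟨i, v, hv, rfl⟩⟩

end SymmetricProduct

lemma tsum_abs_sum_le_sum_tsum_abs {ι α : Type*} [Fintype ι] {f : ι → α → ℝ}
    (hf : ∀ i, Summable fun a => |f i a|) :
    ∑' a, |∑ i, f i a| ≤ ∑ i, ∑' a, |f i a| :=
  calc ∑' a, |∑ i, f i a|
      ≤ ∑' a, ∑ i, |f i a| :=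
        Summable.tsum_le_tsum (fun _ => abs_sum_le_sum_abs _ _)
          (summable_sum fun i _ => (hf i).of_abs).abs (summable_sum fun i _ => hf i)
    _ = ∑ i, ∑' a, |f i a| := Summable.tsum_finsetSum fun i _ => hf i

section Average

variable {n : ℕ} {X α : Type*} {m : X → α → ℝ}

noncomputable def symAverage (n : ℕ) (m : X → α → ℝ) : Quotient (symSetoid n X) → α → ℝ :=
  Quotient.lift (fun v a => (∑ i, m (v i) a) / n) <| by
    rintro v _ ⟨σ, rfl⟩
    funext a
    simp only [comp_apply, Equiv.sum_comp σ fun i => m (v i) a]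

@[simp]
lemma symAverage_mk (v : Fin n → X) (a : α) :
    symAverage n m (Quotient.mk _ v) a = (∑ i, m (v i) a) / n :=
  rfl

lemma symAverage_nonneg (hm : ∀ x a, 0 ≤ m x a) (y : Quotient (symSetoid n X)) (a : α) :
    0 ≤ symAverage n m y a := by
  induction y using Quotient.ind with
  | _ v => exact div_nonneg (sum_nonneg fun i _ => hm (v i) a) n.cast_nonneg

lemma hasSum_symAverage (hn : n ≠ 0) (hm : ∀ x, HasSum (m x) 1) (y : Quotient (symSetoid n X)) :
    HasSum (symAverage n m y) 1 := by
  induction y using Quotient.ind with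
  | _ v =>
    show HasSum (fun a => (∑ i, m (v i) a) / n) 1
    have hsum := (hasSum_sum (s := univ) fun i _ => hm (v i)).div_const (n : ℝ)
    simpa [hn] using hsum

lemma continuous_symAverage [TopologicalSpace X] (hm : ∀ a, Continuous fun x => m x a) (a : α) :
    Continuous fun y : Quotient (symSetoid n X) => symAverage n m y a :=
  isQuotientMap_quotient_mk'.continuous_iff.2 <|
    (continuous_finsetSum _ fun i _ => (hm a).comp (continuous_apply i)).div_const _

lemma tsum_abs_symAverage_comp_sub_le (hn : n ≠ 0) (hm : ∀ x, Summable (m x))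
    {e : α → α} (he : Injective e) {u w : Fin n → X} {ε : ℝ}
    (hε : ∀ i, ∑' a, |m (u i) (e a) - m (w i) a| ≤ ε) :
    ∑' a, |symAverage n m (Quotient.mk _ u) (e a) - symAverage n m (Quotient.mk _ w) a| ≤ ε := by
  have hsummable i : Summable fun a => |m (u i) (e a) - m (w i) a| :=
    (((hm _).comp_injective he).sub (hm _)).abs
  calc ∑' a, |symAverage n m (Quotient.mk _ u) (e a) - symAverage n m (Quotient.mk _ w) a|
      = (∑' a, |∑ i, (m (u i) (e a) - m (w i) a)|) / n := by
        rw [← tsum_div_const]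
        congr 1 with a
        rw [symAverage_mk, symAverage_mk, ← sub_div, ← sum_sub_distrib, abs_div, Nat.abs_cast]
    _ ≤ (∑ i, ∑' a, |m (u i) (e a) - m (w i) a|) / n := by
        gcongr
        exact tsum_abs_sum_le_sum_tsum_abs hsummable
    _ ≤ (∑ _i : Fin n, ε) / n := by
        gcongr with i
        exact hε i
    _ = ε := by
        rw [sum_const, card_univ, Fintype.card_fin, nsmul_eq_mul]
        field_simp

end Average

/-- if a countable group `Γ` acts topologically amenably on a
locally compact space `X`, then for every `n ≥ 2` the diagonal `Γ`-action on
the `n`-fold symmetric product `ΣⁿX = Xⁿ/Sym(n)` is topologically amenable. -/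
theorem stmt14 (Γ : Type*) [Group Γ]
    (X : Type*) [TopologicalSpace X]
    (act : Γ → X → X)
    (hamen : TopAmenable Γ X act)
    (n : ℕ) (hn : 2 ≤ n) :
    TopAmenable Γ (Quotient (symSetoid n X))
      (fun g => Quotient.map (fun v i => act g (v i))
        (fun v w => fun ⟨σ, hσ⟩ => ⟨σ, by rw [← hσ]; rfl⟩)) := by
  intro ε hε K hK L hL
  have hn0 : n ≠ 0 := by omega
  obtain ⟨L', hL', hcoord⟩ := exists_isCompact_forall_coord_mem hL
  obtain ⟨m, hm0, hm1, hmc, hmK⟩ := hamen ε hε K hK L' hL'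
  refine ⟨symAverage n m, symAverage_nonneg hm0, hasSum_symAverage hn0 hm1,
    continuous_symAverage hmc, fun s hs y hy => ?_⟩
  induction y using Quotient.ind with
  | _ v =>
    exact tsum_abs_symAverage_comp_sub_le hn0 (fun x => (hm1 x).summable)
      (mul_right_injective s⁻¹) fun i => hmK s hs (v i) (hcoord v hy i)
end
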